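/- Let G be a group and A a finite dimensional k-algebra. There is a bijection between the set of all G-gradings on A and the set of all bialgebra homomorphisms a(A) → k[G], under which the grading associated to a bialgebra map θ : a(A) → k[G] is given by A_σ^{(θ)} = { x ∈ A | (Id_A ⊗ θ) ∘ η_A(x) = x ⊗ σ } for σ ∈ G. -/

import Mathlib

open TensorProduct

noncomputable section

set_option linter.unusedSectionVars false
set_option linter.unnecessarySimpa false
set_option linter.unusedVariables false
set_option synthInstance.maxHeartbeats 1000000
set_option maxHeartbeats 1000000


variable (k : Type) [Field k]

/-- The relations defining the quantum symmetry semigroup `a(A)` of a finite dimensional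
algebra `A` with basis `e` (with `e 0 = 1`), in terms of the structure constants
`τ i j s = e.repr (e i * e j) s`. -/
inductive ARel {A : Type} [Ring A] [Algebra k A] {n : ℕ} [NeZero n]
    (e : Module.Basis (Fin n) k A) :
    FreeAlgebra k (Fin n × Fin n) → FreeAlgebra k (Fin n × Fin n) → Prop
  | mul (a i j : Fin n) :
      ARel e (∑ u, e.repr (e i * e j) u • FreeAlgebra.ι k (a, u))
        (∑ s, ∑ t, e.repr (e s * e t) a • (FreeAlgebra.ι k (s, i) * FreeAlgebra.ι k (t, j)))
  | unit (a : Fin n) :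
      ARel e (FreeAlgebra.ι k (a, (0 : Fin n))) (if a = 0 then 1 else 0)

/-- The quantum symmetry semigroup `a(A)`. -/
abbrev aA {A : Type} [Ring A] [Algebra k A] {n : ℕ} [NeZero n] (e : Module.Basis (Fin n) k A) :=
  RingQuot (ARel k e)

/-- The generators `x_{s i}` of `a(A)`. -/
def xg {A : Type} [Ring A] [Algebra k A] {n : ℕ} [NeZero n] (e : Module.Basis (Fin n) k A)
    (s i : Fin n) : aA k e :=
  RingQuot.mkAlgHom k (ARel k e) (FreeAlgebra.ι k (s, i))

/-- The canonical map `η_A : A → A ⊗ a(A)`, `e i ↦ ∑ s, e s ⊗ x_{s i}`, as a linear map. -/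
def etaA {A : Type} [Ring A] [Algebra k A] {n : ℕ} [NeZero n] (e : Module.Basis (Fin n) k A) :
    A →ₗ[k] A ⊗[k] aA k e :=
  (e.constr k) fun i => ∑ s, e s ⊗ₜ[k] xg k e s i


/-- The comultiplication of the group bialgebra `k[G]`, determined by `Δ(g) = g ⊗ g`. -/
def gComul (G : Type) [Group G] :
    MonoidAlgebra k G →ₐ[k] MonoidAlgebra k G ⊗[k] MonoidAlgebra k G :=
  MonoidAlgebra.lift k _ G
    { toFun := fun g => MonoidAlgebra.of k G g ⊗ₜ[k] MonoidAlgebra.of k G g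
      map_one' := by simp [Algebra.TensorProduct.one_def, MonoidAlgebra.one_def]
      map_mul' := by intro g h; simp [Algebra.TensorProduct.tmul_mul_tmul] }

/-- The counit of the group bialgebra `k[G]`, determined by `ε(g) = 1`. -/
def gCounit (G : Type) [Group G] : MonoidAlgebra k G →ₐ[k] k :=
  MonoidAlgebra.lift k k G 1

namespace GradEquiv

variable {k : Type} [Field k] {A : Type} [Ring A] [Algebra k A] {n : ℕ} [NeZero n]
  (e : Module.Basis (Fin n) k A) {G : Type} [Group G] [DecidableEq G]

/-- coefficient extraction on the first tensor factor -/
def psi (M : Type) [AddCommGroup M] [Module k M] (s : Fin n) : A ⊗[k] M →ₗ[k] M :=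
  (TensorProduct.lid k M).toLinearMap ∘ₗ TensorProduct.map (e.coord s) LinearMap.id

@[simp] lemma psi_tmul (M : Type) [AddCommGroup M] [Module k M] (s : Fin n) (a : A) (m : M) :
    psi e M s (a ⊗ₜ[k] m) = e.repr a s • m := by
  simp [psi, Module.Basis.coord_apply]

lemma expand {M : Type} [AddCommGroup M] [Module k M] (z : A ⊗[k] M) :
    z = ∑ s, e s ⊗ₜ[k] psi e M s z := by
  induction z using TensorProduct.induction_on with
  | zero => simp
  | tmul a m =>
      simp only [psi_tmul, TensorProduct.tmul_smul, TensorProduct.smul_tmul']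
      rw [← TensorProduct.sum_tmul]
      rw [Module.Basis.sum_repr]
  | add x y hx hy =>
      simp only [map_add, TensorProduct.tmul_add, Finset.sum_add_distrib]
      exact congrArg₂ (· + ·) hx hy

lemma psi_sum {M : Type} [AddCommGroup M] [Module k M] (s : Fin n) (z : Fin n → M) :
    psi e M s (∑ u, e u ⊗ₜ[k] z u) = z s := by
  simp only [map_sum, psi_tmul, Module.Basis.repr_self, Finsupp.single_apply]
  simp [ite_smul]

lemma expand_inj {M : Type} [AddCommGroup M] [Module k M] {z w : Fin n → M}
    (h : ∑ s, e s ⊗ₜ[k] z s = ∑ s, e s ⊗ₜ[k] w s) : z = w := by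
  funext s
  have := congrArg (psi e M s) h
  simpa [psi_sum] using this


/-- the coaction associated to a matrix `y` of elements of `k[G]` -/
def rho (y : Fin n → Fin n → MonoidAlgebra k G) : A →ₗ[k] A ⊗[k] MonoidAlgebra k G :=
  e.constr k fun i => ∑ s, e s ⊗ₜ[k] y s i

@[simp] lemma rho_basis (y : Fin n → Fin n → MonoidAlgebra k G) (i : Fin n) :
    rho e y (e i) = ∑ s, e s ⊗ₜ[k] y s i :=
  Module.Basis.constr_basis e k _ i

lemma rho_mul_basis (y : Fin n → Fin n → MonoidAlgebra k G) (i j : Fin n) :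
    rho e y (e i * e j) = ∑ a, e a ⊗ₜ[k] (∑ u, e.repr (e i * e j) u • y a u) := by
  conv_lhs => rw [← Module.Basis.sum_repr e (e i * e j)]
  simp only [map_sum, map_smul, rho_basis, Finset.smul_sum, TensorProduct.tmul_smul,
    TensorProduct.tmul_sum]
  rw [Finset.sum_comm]

lemma rho_mul_mul (y : Fin n → Fin n → MonoidAlgebra k G) (i j : Fin n) :
    rho e y (e i) * rho e y (e j)
      = ∑ a, e a ⊗ₜ[k] (∑ s, ∑ t, e.repr (e s * e t) a • (y s i * y t j)) := by
  rw [rho_basis, rho_basis, Finset.sum_mul_sum]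
  simp only [Algebra.TensorProduct.tmul_mul_tmul]
  have : ∀ s t : Fin n, (e s * e t) ⊗ₜ[k] (y s i * y t j)
      = ∑ a, e a ⊗ₜ[k] (e.repr (e s * e t) a • (y s i * y t j)) := by
    intro s t
    conv_lhs => rw [← Module.Basis.sum_repr e (e s * e t)]
    rw [TensorProduct.sum_tmul]
    exact Finset.sum_congr rfl fun a _ => by
      rw [TensorProduct.smul_tmul, TensorProduct.tmul_smul]
  simp only [this, TensorProduct.tmul_sum]
  exact Eq.trans (Finset.sum_congr rfl fun s _ => Finset.sum_comm) Finset.sum_comm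

lemma rho_mul_basis_iff (y : Fin n → Fin n → MonoidAlgebra k G) (i j : Fin n) :
    rho e y (e i * e j) = rho e y (e i) * rho e y (e j) ↔
      ∀ a, ∑ u, e.repr (e i * e j) u • y a u
        = ∑ s, ∑ t, e.repr (e s * e t) a • (y s i * y t j) := by
  rw [rho_mul_basis, rho_mul_mul]
  constructor
  · intro h a
    exact congrFun (expand_inj e h) a
  · intro h
    exact Finset.sum_congr rfl fun a _ => by rw [h a]

lemma rho_mul (y : Fin n → Fin n → MonoidAlgebra k G)
    (h : ∀ i j, rho e y (e i * e j) = rho e y (e i) * rho e y (e j)) :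
    ∀ x z : A, rho e y (x * z) = rho e y x * rho e y z := by
  have key : (LinearMap.mul k A).compr₂ (rho e y)
      = (LinearMap.mul k (A ⊗[k] MonoidAlgebra k G)).compl₁₂ (rho e y) (rho e y) := by
    refine Module.Basis.ext e fun i => Module.Basis.ext e fun j => ?_
    simp only [LinearMap.compr₂_apply, LinearMap.mul_apply', LinearMap.compl₁₂_apply]
    exact h i j
  intro x z
  have h2 := DFunLike.congr_fun (DFunLike.congr_fun key x) z
  simp only [LinearMap.compr₂_apply, LinearMap.mul_apply', LinearMap.compl₁₂_apply] at h2
  exact h2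


/-- the four identities satisfied by the matrix of a bialgebra map / of a grading -/
structure Good (y : Fin n → Fin n → MonoidAlgebra k G) : Prop where
  r1 : ∀ a i j, ∑ u, e.repr (e i * e j) u • y a u
      = ∑ s, ∑ t, e.repr (e s * e t) a • (y s i * y t j)
  r2 : ∀ a, y a 0 = if a = 0 then 1 else 0
  dId : ∀ i j, gComul k G (y i j) = ∑ s, y i s ⊗ₜ[k] y s j
  eId : ∀ i j, gCounit k G (y i j) = if i = j then 1 else 0

lemma gComul_of (σ : G) : gComul k G (MonoidAlgebra.of k G σ)
    = MonoidAlgebra.of k G σ ⊗ₜ[k] MonoidAlgebra.of k G σ := by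
  simp [gComul]

lemma gCounit_of (σ : G) : gCounit k G (MonoidAlgebra.of k G σ) = 1 := by
  simp [gCounit]

lemma scalar_inj {c d : Fin n → k} (h : ∑ s, c s • e s = ∑ s, d s • e s) : c = d := by
  funext t
  have h2 := congrArg (fun z => e.repr z t) h
  simpa [Finsupp.single_apply, Finset.sum_ite_eq'] using h2

lemma basis_eq_sum_ite (j : Fin n) :
    e j = ∑ s, (if s = j then (1 : k) else 0) • e s := by
  simp [ite_smul, Finset.sum_ite_eq']

/-- the "counit" operator -/
def ct : A ⊗[k] MonoidAlgebra k G →ₗ[k] A :=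
  (TensorProduct.rid k A).toLinearMap ∘ₗ LinearMap.lTensor A (gCounit k G).toLinearMap

@[simp] lemma ct_tmul (a : A) (f : MonoidAlgebra k G) :
    ct (a ⊗ₜ[k] f) = gCounit k G f • a := by
  simp [ct]

lemma ct_rho_basis (y : Fin n → Fin n → MonoidAlgebra k G) (j : Fin n) :
    ct (rho e y (e j)) = ∑ s, gCounit k G (y s j) • e s := by
  simp [rho_basis]

/-- evaluation of `(id ⊗ Δ) ∘ ρ` on a basis vector -/
lemma L1 (y : Fin n → Fin n → MonoidAlgebra k G) (j : Fin n) :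
    TensorProduct.map LinearMap.id (gComul k G).toLinearMap (rho e y (e j))
      = ∑ s, e s ⊗ₜ[k] gComul k G (y s j) := by
  simp [rho_basis]

/-- evaluation of `α ∘ (ρ ⊗ id) ∘ ρ` on a basis vector -/
lemma L2 (y : Fin n → Fin n → MonoidAlgebra k G) (j : Fin n) :
    (TensorProduct.assoc k A (MonoidAlgebra k G) (MonoidAlgebra k G))
        (LinearMap.rTensor (MonoidAlgebra k G) (rho e y) (rho e y (e j)))
      = ∑ u, e u ⊗ₜ[k] (∑ s, y u s ⊗ₜ[k] y s j) := by
  rw [rho_basis, map_sum, map_sum]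
  simp only [LinearMap.rTensor_tmul, rho_basis, TensorProduct.sum_tmul, map_sum,
    TensorProduct.assoc_tmul, TensorProduct.tmul_sum]
  exact Finset.sum_comm

/-- the canonical identification `A ⊗ k[G] ≃ (G →₀ A)` -/
def Psi : A ⊗[k] MonoidAlgebra k G ≃ₗ[k] (G →₀ A) :=
  (TensorProduct.congr (LinearEquiv.refl k A) (MonoidAlgebra.coeffLinearEquiv k)).trans
    (TensorProduct.finsuppScalarRight k k A G)

lemma Psi_tmul_apply (a : A) (f : MonoidAlgebra k G) (σ : G) :
    Psi (a ⊗ₜ[k] f) σ = f.coeff σ • a :=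
  TensorProduct.finsuppScalarRight_apply_tmul_apply a f.coeff σ

lemma Psi_of (a : A) (σ τ : G) :
    Psi (a ⊗ₜ[k] MonoidAlgebra.of k G σ) τ = if σ = τ then a else 0 := by
  rw [Psi_tmul_apply]
  simp [MonoidAlgebra.of_apply, MonoidAlgebra.single_apply, Finsupp.single_apply]

lemma Psi_symm_eq (f : G →₀ A) :
    (Psi (k := k) (A := A) (G := G)).symm f = f.sum fun τ a => a ⊗ₜ[k] MonoidAlgebra.of k G τ := by
  conv_lhs => rw [← Finsupp.sum_single f]
  rw [map_finsuppSum]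
  exact Finsupp.sum_congr fun τ _ =>
    congrArg (TensorProduct.congr (LinearEquiv.refl k A) (MonoidAlgebra.coeffLinearEquiv k)).symm
      (TensorProduct.finsuppScalarRight_symm_apply_single τ _)

lemma tensor_eq_sum_Psi (z : A ⊗[k] MonoidAlgebra k G) :
    z = (Psi z).sum fun τ a => a ⊗ₜ[k] MonoidAlgebra.of k G τ := by
  rw [← Psi_symm_eq]
  exact (Psi.symm_apply_apply z).symm

lemma ext_on_grading {𝒜 : G → Submodule k A} (hTop : iSup 𝒜 = ⊤)
    {M : Type} [AddCommGroup M] [Module k M] {f g : A →ₗ[k] M}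
    (h : ∀ σ, ∀ x ∈ 𝒜 σ, f x = g x) : f = g := by
  have : ∀ σ, 𝒜 σ ≤ LinearMap.ker (f - g) := by
    intro σ x hx
    simp only [LinearMap.mem_ker, LinearMap.sub_apply, sub_eq_zero]
    exact h σ x hx
  have hker : (⊤ : Submodule k A) ≤ LinearMap.ker (f - g) := hTop ▸ iSup_le this
  ext x
  have := hker (Submodule.mem_top (x := x))
  simpa [sub_eq_zero] using this

section Grading

open scoped DirectSum

variable {𝒜 : G → Submodule k A} (hInt : DirectSum.IsInternal 𝒜)
  (hMul : ∀ (σ τ : G), ∀ a ∈ 𝒜 σ, ∀ b ∈ 𝒜 τ, a * b ∈ 𝒜 (σ * τ))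

/-- the decomposition equivalence -/
def decomp : A ≃ₗ[k] ⨁ σ, 𝒜 σ :=
  (LinearEquiv.ofBijective (DirectSum.coeLinearMap 𝒜) hInt).symm

lemma decomp_of_mem {σ : G} {x : A} (hx : x ∈ 𝒜 σ) (τ : G) :
    (decomp hInt x τ : A) = if σ = τ then x else 0 := by
  split
  · next h =>
      subst h
      rw [decomp, hInt.ofBijective_coeLinearMap_of_mem hx]
  · next h =>
      rw [decomp, hInt.ofBijective_coeLinearMap_of_ne h ⟨x, hx⟩]
      rfl

/-- projection onto the `τ`-component of a grading -/
def projG (τ : G) : A →ₗ[k] A :=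
  (𝒜 τ).subtype ∘ₗ (DirectSum.component k G (fun σ => (𝒜 σ : Submodule k A)) τ) ∘ₗ
    (decomp hInt).toLinearMap

lemma projG_apply (τ : G) (x : A) : projG hInt τ x = (decomp hInt x τ : A) := rfl

lemma projG_of_mem {σ : G} {x : A} (hx : x ∈ 𝒜 σ) (τ : G) :
    projG hInt τ x = if σ = τ then x else 0 := by
  rw [projG_apply]; exact decomp_of_mem hInt hx τ

lemma coe_decomp (x : A) : DirectSum.coeLinearMap 𝒜 (decomp hInt x) = x := by
  have := (LinearEquiv.ofBijective (DirectSum.coeLinearMap 𝒜) hInt).apply_symm_apply x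
  exact this

include hInt in
lemma exists_sum_decomp (x : A) :
    ∃ (S : Finset G) (c : G → A), (∀ τ, c τ ∈ 𝒜 τ) ∧ (∀ τ ∉ S, c τ = 0) ∧ x = ∑ τ ∈ S, c τ := by
  classical
  refine ⟨(decomp hInt x).support, fun τ => (decomp hInt x τ : A), fun τ => (decomp hInt x τ).2,
    ?_, ?_⟩
  · intro τ hτ
    have h0 := DFinsupp.notMem_support_iff.mp hτ
    simp only [h0]
    rfl
  · conv_lhs => rw [← coe_decomp hInt x, ← DirectSum.sum_support_of (decomp hInt x)]
    rw [map_sum]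
    exact Finset.sum_congr rfl fun τ _ => DirectSum.coeLinearMap_of 𝒜 τ _

include hInt hMul in
lemma one_mem_grading : (1 : A) ∈ 𝒜 1 := by
  obtain ⟨S, c, hc, hc0, h1⟩ := exists_sum_decomp hInt 1
  have hu : ∀ τ : G, ∀ x ∈ 𝒜 τ, x * c 1 = x := by
    intro τ x hx
    have hdx : ∀ σ ∈ S, projG hInt τ (x * c σ) = if σ = 1 then x * c σ else 0 := by
      intro σ _
      rw [projG_of_mem hInt (hMul τ σ x hx (c σ) (hc σ))]
      by_cases hσ : σ = 1
      · subst hσ; simp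
      · have h2 : ¬ τ * σ = τ := by simpa using hσ
        simp [h2, hσ]
    have hxx : x = ∑ σ ∈ S, x * c σ := by
      conv_lhs => rw [← mul_one x, h1, Finset.mul_sum]
    have hthis := congrArg (projG hInt τ) hxx
    rw [map_sum, projG_of_mem hInt hx, if_pos rfl] at hthis
    rw [Finset.sum_congr rfl hdx, Finset.sum_ite_eq' S 1 (fun σ => x * c σ)] at hthis
    by_cases h1S : (1 : G) ∈ S
    · exact (hthis.trans (if_pos h1S)).symm
    · rw [hthis.trans (if_neg h1S), zero_mul]
  have hone : (LinearMap.mulRight k (c 1)) = (LinearMap.id : A →ₗ[k] A) := by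
    refine ext_on_grading hInt.submodule_iSup_eq_top fun σ x hx => ?_
    simpa using hu σ x hx
  have h11 : c 1 = 1 := by
    have := DFunLike.congr_fun hone 1
    simpa using this
  exact h11 ▸ hc 1

/-- the coaction of `k[G]` on `A` induced by a grading -/
def rhoOf : A →ₗ[k] A ⊗[k] MonoidAlgebra k G :=
  (DirectSum.toModule k G _ fun σ =>
    ((TensorProduct.mk k A (MonoidAlgebra k G)).flip (MonoidAlgebra.of k G σ)) ∘ₗ
      (𝒜 σ).subtype) ∘ₗ (decomp hInt).toLinearMap

lemma rhoOf_of_mem {σ : G} {x : A} (hx : x ∈ 𝒜 σ) :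
    rhoOf hInt x = x ⊗ₜ[k] MonoidAlgebra.of k G σ := by
  have hd : decomp hInt x = DirectSum.of (fun σ => (𝒜 σ : Submodule k A)) σ ⟨x, hx⟩ := by
    rw [decomp, LinearEquiv.symm_apply_eq]
    exact (DirectSum.coeLinearMap_of 𝒜 σ ⟨x, hx⟩).symm
  rw [rhoOf, LinearMap.comp_apply, LinearEquiv.coe_coe, hd]
  rw [← DirectSum.lof_eq_of k, DirectSum.toModule_lof]
  rfl

/-- matrix of coefficients of a grading -/
def yOf (s i : Fin n) : MonoidAlgebra k G :=
  psi e (MonoidAlgebra k G) s (rhoOf hInt (e i))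

lemma rhoOf_eq_rho : rhoOf hInt = rho e (yOf e hInt) := by
  refine Module.Basis.ext e fun i => ?_
  rw [rho_basis]
  exact expand e _

include hMul in
lemma rhoOf_mul : ∀ x z : A, rhoOf hInt (x * z) = rhoOf hInt x * rhoOf hInt z := by
  have key : (LinearMap.mul k A).compr₂ (rhoOf hInt)
      = (LinearMap.mul k (A ⊗[k] MonoidAlgebra k G)).compl₁₂ (rhoOf hInt) (rhoOf hInt) := by
    refine ext_on_grading (M := A →ₗ[k] (A ⊗[k] MonoidAlgebra k G)) hInt.submodule_iSup_eq_top fun σ x hx => ?_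
    refine ext_on_grading (M := A ⊗[k] MonoidAlgebra k G) hInt.submodule_iSup_eq_top fun τ z hz => ?_
    simp only [LinearMap.compr₂_apply, LinearMap.mul_apply', LinearMap.compl₁₂_apply]
    rw [rhoOf_of_mem hInt hx, rhoOf_of_mem hInt hz,
      rhoOf_of_mem hInt (hMul σ τ x hx z hz),
      Algebra.TensorProduct.tmul_mul_tmul, map_mul]
  intro x z
  have h2 := DFunLike.congr_fun (DFunLike.congr_fun key x) z
  simp only [LinearMap.compr₂_apply, LinearMap.mul_apply', LinearMap.compl₁₂_apply] at h2
  exact h2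

include hMul in
lemma rhoOf_one : rhoOf hInt 1 = 1 := by
  rw [rhoOf_of_mem hInt (one_mem_grading hInt hMul), map_one]
  exact (Algebra.TensorProduct.one_def).symm

include hMul in
lemma good_of_grading (he : e 0 = 1) : Good e (yOf e hInt) := by
  have hre := rhoOf_eq_rho e hInt
  constructor
  · intro a i j
    have hm : rho e (yOf e hInt) (e i * e j)
        = rho e (yOf e hInt) (e i) * rho e (yOf e hInt) (e j) := by
      rw [← hre]; exact rhoOf_mul hInt hMul _ _
    exact ((rho_mul_basis_iff e _ i j).mp hm) a
  · intro a
    have h0 : (∑ s, e s ⊗ₜ[k] yOf e hInt s 0) = (1 : A) ⊗ₜ[k] (1 : MonoidAlgebra k G) := by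
      rw [← rho_basis, ← hre, he, rhoOf_one hInt hMul, Algebra.TensorProduct.one_def]
    have h2 : (1 : A) ⊗ₜ[k] (1 : MonoidAlgebra k G)
        = ∑ s, e s ⊗ₜ[k] (if s = 0 then (1 : MonoidAlgebra k G) else 0) := by
      rw [Finset.sum_congr rfl (fun s (_ : s ∈ Finset.univ) =>
          show e s ⊗ₜ[k] (if s = 0 then (1 : MonoidAlgebra k G) else 0)
            = if s = 0 then e s ⊗ₜ[k] (1 : MonoidAlgebra k G) else 0 by split <;> simp),
        Finset.sum_ite_eq' Finset.univ 0 (fun s => e s ⊗ₜ[k] (1 : MonoidAlgebra k G))]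
      simp [he]
    exact congrFun (expand_inj e (h0.trans h2)) a
  · intro i j
    have hca : (TensorProduct.map (LinearMap.id : A →ₗ[k] A) (gComul k G).toLinearMap) ∘ₗ rhoOf hInt
        = (TensorProduct.assoc k A (MonoidAlgebra k G) (MonoidAlgebra k G)).toLinearMap ∘ₗ
            (LinearMap.rTensor (MonoidAlgebra k G) (rhoOf hInt)) ∘ₗ rhoOf hInt := by
      refine ext_on_grading (M := A ⊗[k] (MonoidAlgebra k G ⊗[k] MonoidAlgebra k G))
        hInt.submodule_iSup_eq_top fun σ x hx => ?_
      simp only [LinearMap.comp_apply, rhoOf_of_mem hInt hx, TensorProduct.map_tmul,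
        LinearMap.id_apply, AlgHom.toLinearMap_apply, gComul_of, LinearEquiv.coe_coe,
        LinearMap.rTensor_tmul, TensorProduct.assoc_tmul]
    have h3 := DFunLike.congr_fun hca (e j)
    simp only [LinearMap.comp_apply, LinearEquiv.coe_coe, hre] at h3
    rw [L1, L2] at h3
    exact congrFun (expand_inj e h3) i
  · intro i j
    have hcm : ct ∘ₗ rhoOf hInt = LinearMap.id := by
      refine ext_on_grading (M := A) hInt.submodule_iSup_eq_top fun σ x hx => ?_
      simp only [LinearMap.comp_apply, LinearMap.id_apply, rhoOf_of_mem hInt hx, ct_tmul,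
        gCounit_of, one_smul]
    have h3 := DFunLike.congr_fun hcm (e j)
    rw [LinearMap.comp_apply, hre, ct_rho_basis, LinearMap.id_apply] at h3
    have h4 := scalar_inj e (h3.trans (basis_eq_sum_ite e j))
    exact congrFun h4 i

include hInt in
lemma mem_of_rhoOf {σ : G} {x : A} (hx : rhoOf hInt x = x ⊗ₜ[k] MonoidAlgebra.of k G σ) :
    x ∈ 𝒜 σ := by
  obtain ⟨S, c, hc, hc0, hsum⟩ := exists_sum_decomp hInt x
  have h1 : rhoOf hInt x = ∑ τ ∈ S, c τ ⊗ₜ[k] MonoidAlgebra.of k G τ := by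
    conv_lhs => rw [hsum]
    rw [map_sum]
    exact Finset.sum_congr rfl fun τ _ => rhoOf_of_mem hInt (hc τ)
  have h2 := congrArg (fun z => Psi z σ) (h1.symm.trans hx)
  simp only [map_sum, Finsupp.coe_finset_sum, Finset.sum_apply, Psi_of, if_pos rfl,
    if_true] at h2
  rw [Finset.sum_ite_eq' S σ c] at h2
  by_cases hσS : σ ∈ S
  · rw [if_pos hσS] at h2
    exact h2 ▸ hc σ
  · rw [if_neg hσS] at h2
    rw [← h2]
    exact (𝒜 σ).zero_mem

end Grading
section GoodToGrading

variable (y : Fin n → Fin n → MonoidAlgebra k G)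

/-- the homogeneous component associated to `y` and `σ` -/
def Asub (σ : G) : Submodule k A :=
  LinearMap.ker (rho e y
    - (TensorProduct.mk k A (MonoidAlgebra k G)).flip (MonoidAlgebra.of k G σ))

lemma mem_Asub {σ : G} {x : A} :
    x ∈ Asub e y σ ↔ rho e y x = x ⊗ₜ[k] MonoidAlgebra.of k G σ := by
  simp only [Asub, LinearMap.mem_ker, LinearMap.sub_apply, sub_eq_zero, LinearMap.flip_apply,
    TensorProduct.mk_apply]

/-- components of the coaction `rho` -/
def rc : A →ₗ[k] (G →₀ A) := Psi.toLinearMap ∘ₗ rho e y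

lemma rc_apply (x : A) : rc e y x = Psi (rho e y x) := rfl

lemma rc_of_mem {σ : G} {x : A} (hx : x ∈ Asub e y σ) :
    rc e y x = Finsupp.single σ x := by
  rw [rc_apply, (mem_Asub e y).mp hx]
  ext τ
  rw [Psi_of, Finsupp.single_apply]

lemma rho_eq_sum_rc (x : A) :
    rho e y x = (rc e y x).sum fun τ a => a ⊗ₜ[k] MonoidAlgebra.of k G τ := by
  rw [rc_apply]
  exact tensor_eq_sum_Psi _

variable {y} (hy : Good e y)

include hy in
lemma ct_rho : ct ∘ₗ rho e y = LinearMap.id := by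
  refine Module.Basis.ext e fun j => ?_
  rw [LinearMap.comp_apply, ct_rho_basis, LinearMap.id_apply]
  rw [Finset.sum_congr rfl fun s (_ : s ∈ Finset.univ) => by rw [hy.eId s j]]
  exact (basis_eq_sum_ite e j).symm

include hy in
lemma sum_rc (x : A) : (rc e y x).sum (fun _ a => a) = x := by
  conv_rhs => rw [← LinearMap.id_apply (R := k) x, ← ct_rho e hy, LinearMap.comp_apply,
    rho_eq_sum_rc e y x]
  rw [map_finsuppSum]
  exact (Finsupp.sum_congr fun τ _ => by rw [ct_tmul, gCounit_of, one_smul]).symm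

include hy in
lemma coassoc_op :
    (TensorProduct.map (LinearMap.id : A →ₗ[k] A) (gComul k G).toLinearMap) ∘ₗ rho e y
      = (TensorProduct.assoc k A (MonoidAlgebra k G) (MonoidAlgebra k G)).toLinearMap ∘ₗ
          (LinearMap.rTensor (MonoidAlgebra k G) (rho e y)) ∘ₗ rho e y := by
  refine Module.Basis.ext e fun j => ?_
  simp only [LinearMap.comp_apply, LinearEquiv.coe_coe]
  rw [L1, L2]
  exact Finset.sum_congr rfl fun s _ => by rw [hy.dId]

/-- evaluation of the second `k[G]`-factor at `σ` -/
def chi (σ : G) : A ⊗[k] (MonoidAlgebra k G ⊗[k] MonoidAlgebra k G)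
    →ₗ[k] A ⊗[k] MonoidAlgebra k G :=
  TensorProduct.map LinearMap.id
    ((TensorProduct.rid k (MonoidAlgebra k G)).toLinearMap ∘ₗ
      LinearMap.lTensor (MonoidAlgebra k G)
        (Finsupp.lapply σ ∘ₗ (MonoidAlgebra.coeffLinearEquiv k).toLinearMap))

lemma chi_tmul (σ : G) (a : A) (g h : MonoidAlgebra k G) :
    chi σ (a ⊗ₜ[k] (g ⊗ₜ[k] h)) = h.coeff σ • (a ⊗ₜ[k] g) := by
  simp only [chi, TensorProduct.map_tmul, LinearMap.id_apply, LinearMap.comp_apply,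
    LinearMap.lTensor_tmul, Finsupp.lapply_apply, LinearEquiv.coe_coe, TensorProduct.rid_tmul]
  rw [TensorProduct.tmul_smul]
  rfl

lemma chi_assoc_of (σ τ : G) (w : A ⊗[k] MonoidAlgebra k G) :
    chi σ ((TensorProduct.assoc k A (MonoidAlgebra k G) (MonoidAlgebra k G))
        (w ⊗ₜ[k] MonoidAlgebra.of k G τ))
      = if τ = σ then w else 0 := by
  induction w using TensorProduct.induction_on with
  | zero => simp
  | tmul a g =>
      rw [TensorProduct.assoc_tmul, chi_tmul]
      have : (MonoidAlgebra.of k G τ).coeff σ = if τ = σ then (1 : k) else 0 := by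
        rw [MonoidAlgebra.of_apply, MonoidAlgebra.single_apply]
      rw [this]
      split <;> simp
  | add w₁ w₂ h₁ h₂ =>
      rw [TensorProduct.add_tmul, map_add, map_add, h₁, h₂]
      split <;> simp

include hy in
lemma rc_mem (x : A) (σ : G) :
    rho e y (rc e y x σ) = (rc e y x σ) ⊗ₜ[k] MonoidAlgebra.of k G σ := by
  classical
  have hphi := DFunLike.congr_fun (coassoc_op e hy) x
  simp only [LinearMap.comp_apply, LinearEquiv.coe_coe] at hphi
  rw [rho_eq_sum_rc e y x, map_finsuppSum, map_finsuppSum] at hphi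
  rw [map_finsuppSum] at hphi
  have h2 := congrArg (chi σ) hphi
  rw [map_finsuppSum, map_finsuppSum] at h2
  have hL : ((rc e y x).sum fun τ a => chi σ
      (TensorProduct.map (LinearMap.id : A →ₗ[k] A) (gComul k G).toLinearMap
        (a ⊗ₜ[k] MonoidAlgebra.of k G τ)))
      = (rc e y x).sum fun τ a => if τ = σ then a ⊗ₜ[k] MonoidAlgebra.of k G σ else 0 := by
    refine Finsupp.sum_congr fun τ _ => ?_
    rw [TensorProduct.map_tmul, LinearMap.id_apply, AlgHom.toLinearMap_apply, gComul_of,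
      chi_tmul]
    have : (MonoidAlgebra.of k G τ).coeff σ = if τ = σ then (1 : k) else 0 := by
      rw [MonoidAlgebra.of_apply, MonoidAlgebra.single_apply]
    rw [this]
    split
    · next hh => subst hh; simp
    · simp
  have hR : ((rc e y x).sum fun τ a => chi σ
      ((TensorProduct.assoc k A (MonoidAlgebra k G) (MonoidAlgebra k G))
        (LinearMap.rTensor (MonoidAlgebra k G) (rho e y) (a ⊗ₜ[k] MonoidAlgebra.of k G τ))))
      = (rc e y x).sum fun τ a => if τ = σ then rho e y a else 0 := by
    refine Finsupp.sum_congr fun τ _ => ?_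
    rw [LinearMap.rTensor_tmul, chi_assoc_of]
  rw [hL, hR] at h2
  rw [Finsupp.sum_ite_eq' (rc e y x) σ fun τ a => a ⊗ₜ[k] MonoidAlgebra.of k G σ,
    Finsupp.sum_ite_eq' (rc e y x) σ fun τ a => rho e y a] at h2
  by_cases hσ : σ ∈ (rc e y x).support
  · rw [if_pos hσ, if_pos hσ] at h2
    exact h2.symm
  · have h0 : rc e y x σ = 0 := Finsupp.notMem_support_iff.mp hσ
    rw [h0, map_zero, TensorProduct.zero_tmul]

include hy in
lemma internal_Asub : DirectSum.IsInternal (fun σ => Asub e y σ) := by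
  rw [DirectSum.isInternal_submodule_iff_iSupIndep_and_iSup_eq_top]
  constructor
  · intro σ
    rw [Submodule.disjoint_def]
    intro x hx1 hx2
    have hker : (⨆ τ, ⨆ (_ : τ ≠ σ), Asub e y τ)
        ≤ LinearMap.ker ((Finsupp.lapply σ : (G →₀ A) →ₗ[k] A) ∘ₗ rc e y) := by
      refine iSup_le fun τ => iSup_le fun hτ z hz => ?_
      simp only [LinearMap.mem_ker, LinearMap.comp_apply, Finsupp.lapply_apply,
        rc_of_mem e y hz, Finsupp.single_apply, if_neg hτ]
    have h0 := hker hx2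
    simp only [LinearMap.mem_ker, LinearMap.comp_apply, Finsupp.lapply_apply,
      rc_of_mem e y hx1, Finsupp.single_apply, if_pos rfl] at h0
    exact h0
  · rw [eq_top_iff]
    intro x _
    rw [← sum_rc e hy x]
    refine Submodule.sum_mem _ fun τ _ => ?_
    exact Submodule.mem_iSup_of_mem τ ((mem_Asub e y).mpr (rc_mem e hy x τ))

lemma mul_Asub (hr1 : ∀ a i j, ∑ u, e.repr (e i * e j) u • y a u
      = ∑ s, ∑ t, e.repr (e s * e t) a • (y s i * y t j))
    {σ τ : G} {a b : A} (ha : a ∈ Asub e y σ) (hb : b ∈ Asub e y τ) :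
    a * b ∈ Asub e y (σ * τ) := by
  rw [mem_Asub e y]
  rw [rho_mul e y (fun i j => (rho_mul_basis_iff e y i j).mpr fun u => hr1 u i j) a b,
    (mem_Asub e y).mp ha, (mem_Asub e y).mp hb, Algebra.TensorProduct.tmul_mul_tmul, ← map_mul]

end GoodToGrading

section Theta

lemma aA_algHom_ext {B : Type} [Semiring B] [Algebra k B] {f g : aA k e →ₐ[k] B}
    (h : ∀ s i, f (xg k e s i) = g (xg k e s i)) : f = g := by
  have hfr : f.comp (RingQuot.mkAlgHom k (ARel k e)) = g.comp (RingQuot.mkAlgHom k (ARel k e)) :=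
    FreeAlgebra.hom_ext (funext fun p => by exact h p.1 p.2)
  refine DFunLike.ext _ _ fun z => ?_
  obtain ⟨w, rfl⟩ := RingQuot.mkAlgHom_surjective k (ARel k e) z
  exact DFunLike.congr_fun hfr w

lemma good_of_theta (Δ : aA k e →ₐ[k] aA k e ⊗[k] aA k e) (ε : aA k e →ₐ[k] k)
    (hΔ : ∀ i j, Δ (xg k e i j) = ∑ s, xg k e i s ⊗ₜ[k] xg k e s j)
    (hε : ∀ i j, ε (xg k e i j) = if i = j then 1 else 0)
    (θ : aA k e →ₐ[k] MonoidAlgebra k G)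
    (h1 : ∀ z, TensorProduct.map θ.toLinearMap θ.toLinearMap (Δ z) = gComul k G (θ z))
    (h2 : ∀ z, gCounit k G (θ z) = ε z) :
    Good e (fun s i => θ (xg k e s i)) := by
  constructor
  · intro a i j
    have h3 := congrArg θ (RingQuot.mkAlgHom_rel k (ARel.mul (e := e) a i j))
    simp only [map_sum, map_smul, map_mul] at h3
    exact h3
  · intro a
    have h3 := congrArg θ (RingQuot.mkAlgHom_rel k (ARel.unit (e := e) a))
    by_cases h : a = 0
    · subst h
      simp at h3 ⊢
      exact h3
    · simp [h] at h3 ⊢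
      exact h3
  · intro i j
    have h3 := h1 (xg k e i j)
    rw [hΔ i j, map_sum] at h3
    simp only [TensorProduct.map_tmul, AlgHom.toLinearMap_apply] at h3
    exact h3.symm
  · intro i j
    have h3 := h2 (xg k e i j)
    rw [hε i j] at h3
    exact h3

lemma rho_theta (θ : aA k e →ₐ[k] MonoidAlgebra k G) :
    TensorProduct.map LinearMap.id θ.toLinearMap ∘ₗ etaA k e
      = rho e (fun s i => θ (xg k e s i)) := by
  refine Module.Basis.ext e fun i => ?_
  rw [LinearMap.comp_apply, etaA, Module.Basis.constr_basis, rho_basis, map_sum]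
  simp [TensorProduct.map_tmul]

lemma yOf_Asub {y : Fin n → Fin n → MonoidAlgebra k G} (hy : Good e y)
    (hInt' : DirectSum.IsInternal (fun σ => Asub e y σ)) :
    yOf e hInt' = y := by
  funext s i
  rw [yOf]
  have hro : rhoOf hInt' = rho e y := by
    refine ext_on_grading hInt'.submodule_iSup_eq_top fun σ x hx => ?_
    rw [rhoOf_of_mem _ hx, (mem_Asub e y).mp hx]
  rw [hro, rho_basis, psi_sum]

end Theta

section Construct

variable {𝒜 : G → Submodule k A} (hInt : DirectSum.IsInternal 𝒜)

/-- the bialgebra map associated to a grading -/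
def thetaOf (hg : Good e (yOf e hInt)) : aA k e →ₐ[k] MonoidAlgebra k G :=
  RingQuot.liftAlgHom k ⟨FreeAlgebra.lift k fun p => yOf e hInt p.1 p.2, by
    intro x y h
    cases h with
    | mul a i j =>
        simp only [map_sum, map_smul, map_mul, FreeAlgebra.lift_ι_apply]
        exact hg.r1 a i j
    | unit a =>
        rw [FreeAlgebra.lift_ι_apply, hg.r2 a]
        split <;> simp⟩

lemma thetaOf_xg (hg : Good e (yOf e hInt)) (s i : Fin n) :
    thetaOf e hInt hg (xg k e s i) = yOf e hInt s i := by
  rw [xg, thetaOf, RingQuot.liftAlgHom_mkAlgHom_apply, FreeAlgebra.lift_ι_apply]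

lemma algMap_eq (θ : aA k e →ₐ[k] MonoidAlgebra k G) (w : aA k e ⊗[k] aA k e) :
    TensorProduct.map θ.toLinearMap θ.toLinearMap w = Algebra.TensorProduct.map θ θ w := by
  induction w using TensorProduct.induction_on with
  | zero => simp
  | tmul a b => rw [TensorProduct.map_tmul, Algebra.TensorProduct.map_tmul]; rfl
  | add a b ha hb => rw [map_add, map_add, ha, hb]

lemma thetaOf_comul (Δ : aA k e →ₐ[k] aA k e ⊗[k] aA k e)
    (hΔ : ∀ i j, Δ (xg k e i j) = ∑ s, xg k e i s ⊗ₜ[k] xg k e s j)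
    (hg : Good e (yOf e hInt)) (z : aA k e) :
    TensorProduct.map (thetaOf e hInt hg).toLinearMap (thetaOf e hInt hg).toLinearMap (Δ z)
      = gComul k G (thetaOf e hInt hg z) := by
  rw [algMap_eq]
  have hhom : (Algebra.TensorProduct.map (thetaOf e hInt hg) (thetaOf e hInt hg)).comp Δ
      = (gComul k G).comp (thetaOf e hInt hg) := by
    refine aA_algHom_ext e fun s i => ?_
    rw [AlgHom.comp_apply, AlgHom.comp_apply, hΔ s i, map_sum, thetaOf_xg, hg.dId s i]
    exact Finset.sum_congr rfl fun u _ => by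
      rw [Algebra.TensorProduct.map_tmul, thetaOf_xg, thetaOf_xg]
  exact DFunLike.congr_fun hhom z

lemma thetaOf_counit (ε : aA k e →ₐ[k] k)
    (hε : ∀ i j, ε (xg k e i j) = if i = j then 1 else 0)
    (hg : Good e (yOf e hInt)) (z : aA k e) :
    gCounit k G (thetaOf e hInt hg z) = ε z := by
  have hhom : (gCounit k G).comp (thetaOf e hInt hg) = ε := by
    refine aA_algHom_ext e fun s i => ?_
    rw [AlgHom.comp_apply, thetaOf_xg, hg.eId s i, hε s i]
  exact DFunLike.congr_fun hhom z

lemma Asub_yOf (σ : G) : Asub e (yOf e hInt) σ = 𝒜 σ := by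
  ext x
  rw [mem_Asub e _, ← rhoOf_eq_rho e hInt]
  exact ⟨fun h => mem_of_rhoOf hInt h, fun h => rhoOf_of_mem hInt h⟩

end Construct

end GradEquiv

/-- For a group `G` and a finite dimensional `k`-algebra `A`, there is a
bijection between the set of `G`-gradings on `A` and the set of bialgebra homomorphisms
`a(A) → k[G]`, under which the grading associated to `θ` is
`A_σ^{(θ)} = { x ∈ A | (Id_A ⊗ θ) ∘ η_A (x) = x ⊗ σ }`. -/
theorem gradings_equiv_bialgebra_maps {A : Type} [Ring A] [Algebra k A] {n : ℕ} [NeZero n]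
    (e : Module.Basis (Fin n) k A) (he : e 0 = 1)
    (Δ : aA k e →ₐ[k] aA k e ⊗[k] aA k e) (ε : aA k e →ₐ[k] k)
    (hΔ : ∀ i j, Δ (xg k e i j) = ∑ s, xg k e i s ⊗ₜ[k] xg k e s j)
    (hε : ∀ i j, ε (xg k e i j) = if i = j then 1 else 0)
    (G : Type) [Group G] [DecidableEq G] :
    ∃ F : -- bialgebra homomorphisms `a(A) → k[G]`
        {θ : aA k e →ₐ[k] MonoidAlgebra k G //
          (∀ z, TensorProduct.map θ.toLinearMap θ.toLinearMap (Δ z) = gComul k G (θ z)) ∧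
          (∀ z, gCounit k G (θ z) = ε z)} ≃
        -- `G`-gradings on `A`
        {𝒜 : G → Submodule k A //
          DirectSum.IsInternal 𝒜 ∧
          ∀ (σ τ : G), ∀ a ∈ 𝒜 σ, ∀ b ∈ 𝒜 τ, a * b ∈ 𝒜 (σ * τ)},
      ∀ θ (σ : G) (x : A),
        x ∈ (F θ).1 σ ↔
          TensorProduct.map LinearMap.id (θ.1).toLinearMap (etaA k e x) =
            x ⊗ₜ[k] MonoidAlgebra.of k G σ := by
  classical
  refine ⟨{
      toFun := fun θ => ⟨fun σ => GradEquiv.Asub e (fun s i => θ.1 (xg k e s i)) σ,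
        GradEquiv.internal_Asub e (GradEquiv.good_of_theta e Δ ε hΔ hε θ.1 θ.2.1 θ.2.2),
        fun σ τ a ha b hb => GradEquiv.mul_Asub e
          (GradEquiv.good_of_theta e Δ ε hΔ hε θ.1 θ.2.1 θ.2.2).r1 ha hb⟩
      invFun := fun P => ⟨GradEquiv.thetaOf e P.2.1
          (GradEquiv.good_of_grading e P.2.1 P.2.2 he),
        fun z => GradEquiv.thetaOf_comul e P.2.1 Δ hΔ _ z,
        fun z => GradEquiv.thetaOf_counit e P.2.1 ε hε _ z⟩
      left_inv := ?_
      right_inv := ?_ }, ?_⟩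
  · intro θ
    refine Subtype.ext ?_
    refine GradEquiv.aA_algHom_ext e fun s i => ?_
    rw [GradEquiv.thetaOf_xg]
    exact congrFun (congrFun (GradEquiv.yOf_Asub e
      (GradEquiv.good_of_theta e Δ ε hΔ hε θ.1 θ.2.1 θ.2.2) _) s) i
  · intro P
    refine Subtype.ext (funext fun σ => ?_)
    have hfun : (fun s i => GradEquiv.thetaOf e P.2.1
        (GradEquiv.good_of_grading e P.2.1 P.2.2 he) (xg k e s i)) = GradEquiv.yOf e P.2.1 :=
      funext fun s => funext fun i => GradEquiv.thetaOf_xg e P.2.1 _ s i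
    show GradEquiv.Asub e _ σ = P.1 σ
    rw [hfun]
    exact GradEquiv.Asub_yOf e P.2.1 σ
  · intro θ σ x
    have hrt := DFunLike.congr_fun (GradEquiv.rho_theta e θ.1) x
    rw [LinearMap.comp_apply] at hrt
    change x ∈ GradEquiv.Asub e (fun s i => θ.1 (xg k e s i)) σ ↔ _
    rw [GradEquiv.mem_Asub e _, ← hrt]

end
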